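/- arXiv:2101.10400 — 3 statements merged into one kernel-verified Lean document; each statement's English description precedes it below -/
import Mathlib

section
/- Let p be a prime, R a commutative ring of characteristic p, and m, N natural numbers. Then for every polynomial f ∈ R[X], the (N + p^m)-th Hasse derivative satisfies D^{(N+p^m)}(X^{p^m}·f) = X^{p^m}·D^{(N+p^m)}(f) + D^{(N)}(f). Equivalently, as R-linear endomorphisms of R[X], the commutator of multiplication by X^{p^m} with D^{(N+p^m)} equals −D^{(N)}: X^{p^m}·D^{(N+p^m)}(f) − D^{(N+p^m)}(X^{p^m}·f) = −D^{(N)}(f). -/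
/-! Expand `D^{(N + p^m)}(X^{p^m} * f)` by the Leibniz rule for Hasse derivatives. Since
`p ∣ C(p^m, k)` for `0 < k < p^m`, the only surviving derivatives of `X^{p^m}` are those of
order `0` and `p^m`, which give the two terms of the right-hand side. -/

open Polynomial

section

variable {R : Type*} [Semiring R]

theorem hasseDeriv_X_pow (k n : ℕ) :
    hasseDeriv k (X ^ n : R[X]) = (n.choose k : R[X]) * X ^ (n - k) := by
  rw [← monomial_one_right_eq_X_pow, hasseDeriv_monomial, mul_one, ← C_mul_X_pow_eq_monomial,
    ← map_natCast C]

theorem hasseDeriv_X_pow_self (n : ℕ) : hasseDeriv n (X ^ n : R[X]) = 1 := by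
  rw [hasseDeriv_X_pow, Nat.choose_self, Nat.sub_self, pow_zero, Nat.cast_one, one_mul]

theorem hasseDeriv_X_pow_char_pow_eq_zero {p : ℕ} (hp : p.Prime) [CharP R p] {m k : ℕ}
    (hk₀ : k ≠ 0) (hk : k ≠ p ^ m) : hasseDeriv k (X ^ p ^ m : R[X]) = 0 := by
  have hchoose : ((p ^ m).choose k : R[X]) = 0 :=
    (CharP.cast_eq_zero_iff R[X] p _).2 (hp.dvd_choose_pow hk₀ hk)
  rw [hasseDeriv_X_pow, hchoose, zero_mul]

end

/-- In characteristic `p`, the Hasse derivatives satisfy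
`D^{(N+p^m)}(X^{p^m}·f) = X^{p^m}·D^{(N+p^m)}(f) + D^{(N)}(f)`, i.e. the commutator of
multiplication by `X^{p^m}` with `D^{(N+p^m)}` equals `−D^{(N)}`. -/
theorem hasseDeriv_pow_p_mul (p : ℕ) (hp : p.Prime) (R : Type*) [CommRing R] [CharP R p]
    (m N : ℕ) (f : R[X]) :
    hasseDeriv (N + p ^ m) (X ^ p ^ m * f) =
      X ^ p ^ m * hasseDeriv (N + p ^ m) f + hasseDeriv N f := by
  have hq : p ^ m ≠ 0 := pow_ne_zero m hp.ne_zero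
  have hpairs : ((0, N + p ^ m) : ℕ × ℕ) ≠ (p ^ m, N) := fun h => hq (congrArg Prod.fst h).symm
  rw [hasseDeriv_mul, Finset.sum_eq_add _ _ hpairs]
  · rw [hasseDeriv_zero', hasseDeriv_X_pow_self, one_mul]
  · rintro ⟨i, j⟩ hij hne
    rw [Finset.HasAntidiagonal.mem_antidiagonal] at hij
    rw [hasseDeriv_X_pow_char_pow_eq_zero hp (by grind) (by grind), zero_mul]
  all_goals simp [add_comm]
end

section
/- Let p be a prime, R a commutative ring of characteristic p, and m a natural number. Let a : ℕ → R[X] be a finitely supported function and let U be the R-linear endomorphism of R[X] given by U(f) = Σ_ν a_ν · D^{(ν)}(f). Then there exists a finitely supported function b : ℕ → R[X] (namely b_{ν+p^m} = −a_ν and b_μ = 0 for μ < p^m) such that the endomorphism Q(f) = Σ_ν b_ν · D^{(ν)}(f) satisfies the commutator identity X^{p^m}·Q(f) − Q(X^{p^m}·f) = U(f) for all f ∈ R[X]; moreover, if a_ν = 0 for all ν > n, then b_ν = 0 for all ν > n + p^m. -/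
open Polynomial

/-! In characteristic `p` all binomial coefficients `C(p^m, k)` with `0 < k < p^m` vanish, so
the Leibniz rule for Hasse derivatives gives
`D^{(ν + p^m)} (X^{p^m} f) = X^{p^m} D^{(ν + p^m)} f + D^{(ν)} f`.
Hence shifting the coefficients of `U` up by `p^m` and negating them produces `Q`. -/

theorem hasseDeriv_X_pow_prime_pow_eq_zero {p : ℕ} (hp : p.Prime) {R : Type*} [CommRing R]
    [CharP R p] (m : ℕ) {k : ℕ} (hk₀ : k ≠ 0) (hk : k ≠ p ^ m) :
    hasseDeriv k (X ^ p ^ m : R[X]) = 0 := by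
  rw [X_pow_eq_monomial, hasseDeriv_monomial,
    (CharP.cast_eq_zero_iff R p _).mpr (hp.dvd_choose_pow hk₀ hk), zero_mul, monomial_zero_right]

theorem hasseDeriv_add_prime_pow_X_pow_mul {p : ℕ} (hp : p.Prime) {R : Type*} [CommRing R]
    [CharP R p] (m ν : ℕ) (f : R[X]) :
    hasseDeriv (ν + p ^ m) (X ^ p ^ m * f) =
      X ^ p ^ m * hasseDeriv (ν + p ^ m) f + hasseDeriv ν f := by
  have hq : p ^ m ≠ 0 := pow_ne_zero _ hp.ne_zero
  rw [hasseDeriv_mul, Finset.sum_eq_add_of_mem (0, ν + p ^ m) (p ^ m, ν) (by simp)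
    (by simp [add_comm]) (by simp [hq.symm])]
  · simp [X_pow_eq_monomial, hasseDeriv_monomial]
  · rintro ⟨i, j⟩ hij ⟨hne_left, hne_right⟩
    rw [Finset.HasAntidiagonal.mem_antidiagonal] at hij
    rw [hasseDeriv_X_pow_prime_pow_eq_zero hp m (by grind) (by grind), zero_mul]

/-- One-variable mod-`p` version of Berthelot's commutator lemma: for a differential
operator `U = Σ_ν a_ν·D^{(ν)}` (with `a` finitely supported, `D^{(ν)}` the Hasse
derivatives) on `R[X]`, `R` of characteristic `p`, there is an operator
`Q = Σ_ν b_ν·D^{(ν)}` with `X^{p^m}·Q(f) − Q(X^{p^m}·f) = U(f)` for all `f`; moreover if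
`a_ν = 0` for all `ν > n` then `b_ν = 0` for all `ν > n + p^m`. -/
theorem exists_commutator_eq (p : ℕ) (hp : p.Prime) (R : Type*) [CommRing R] [CharP R p]
    (m : ℕ) (a : ℕ →₀ R[X]) :
    ∃ b : ℕ →₀ R[X],
      (∀ f : R[X],
        X ^ p ^ m * (b.sum fun ν c => c * hasseDeriv ν f) -
            (b.sum fun ν c => c * hasseDeriv ν (X ^ p ^ m * f)) =
          a.sum fun ν c => c * hasseDeriv ν f) ∧
      (∀ n : ℕ, (∀ ν > n, a ν = 0) → ∀ ν > n + p ^ m, b ν = 0) := by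
  refine ⟨(-a).embDomain (addRightEmbedding (p ^ m)), fun f => ?_, fun n ha ν hν => ?_⟩
  · rw [Finsupp.sum_embDomain, Finsupp.sum_embDomain, Finsupp.sum_neg_index (by simp),
      Finsupp.sum_neg_index (by simp), Finsupp.sum, Finsupp.sum, Finsupp.sum, Finset.mul_sum,
      ← Finset.sum_sub_distrib]
    refine Finset.sum_congr rfl fun ν _ => ?_
    rw [addRightEmbedding_apply, hasseDeriv_add_prime_pow_X_pow_mul hp]
    ring
  · obtain ⟨μ, rfl⟩ : ∃ μ, ν = μ + p ^ m := ⟨ν - p ^ m, by omega⟩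
    rw [← addRightEmbedding_apply, Finsupp.embDomain_apply_self, Finsupp.neg_apply,
      ha μ (by omega), neg_zero]
end

section
/- Let R be an associative unital ℚ-algebra containing elements t and ∂ satisfying ∂·t − t·∂ = 1, and let M be a left R-module. Set M₀ := {m ∈ M : t·m = 0}. If u ∈ M satisfies tʲ·u = 0 for some integer j ≥ 1, then u belongs to the R-submodule of M generated by M₀. -/
/-! If `t ^ (n + 1)` kills `u` then `∂ t ^ (n + 1) = t ^ n (t ∂ + n + 1)` shows that `t ^ n` kills
both `t u` and `(t ∂ + n + 1) u`; by induction both lie in the span of `ker t`, hence so does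
`(t ∂ + n + 1) u - ∂ (t u) = n u`, and `n` is invertible in a `ℚ`-algebra. -/

theorem mul_pow_succ_of_mul_sub_mul_eq_one {R : Type*} [Ring R] {t d : R}
    (h : d * t - t * d = 1) (n : ℕ) : d * t ^ (n + 1) = t ^ n * (t * d + (n + 1)) := by
  induction n with
  | zero => simpa [sub_eq_iff_eq_add'] using h
  | succ n ih =>
    rw [pow_succ, ← mul_assoc, ih, pow_succ, mul_assoc, mul_assoc]
    congr 1
    rw [add_mul, add_mul, mul_assoc, sub_eq_iff_eq_add'.mp h, (Nat.cast_commute n t).eq]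
    push_cast
    noncomm_ring

section

variable {R M : Type*} [Ring R] [AddCommGroup M] [Module R M] {t d : R}

theorem natCast_smul_mem_span_ker_of_pow_succ_smul_eq_zero (h : d * t - t * d = 1) {n : ℕ}
    (ih : ∀ v : M, t ^ n • v = 0 → v ∈ Submodule.span R {m : M | t • m = 0})
    {u : M} (hu : t ^ (n + 1) • u = 0) :
    (n : R) • u ∈ Submodule.span R {m : M | t • m = 0} := by
  have htu : t • u ∈ Submodule.span R {m : M | t • m = 0} :=
    ih _ (by rwa [smul_smul, ← pow_succ])
  have hw : (t * d + (n + 1)) • u ∈ Submodule.span R {m : M | t • m = 0} :=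
    ih _ (by rw [smul_smul, ← mul_pow_succ_of_mul_sub_mul_eq_one h, mul_smul, hu, smul_zero])
  have hn : (n : R) • u = (t * d + (n + 1)) • u - d • t • u := by
    rw [smul_smul, ← sub_smul, sub_eq_iff_eq_add'.mp h]
    congr 1
    abel
  rw [hn]
  exact sub_mem hw (Submodule.smul_mem _ d htu)

end

theorem mem_span_ker_of_pow_smul_eq_zero_general
    (R : Type*) [Ring R] [Algebra ℚ R] (t d : R) (h : d * t - t * d = 1)
    (M : Type*) [AddCommGroup M] [Module R M]
    (u : M) (j : ℕ) (hu : t ^ j • u = 0) :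
    u ∈ Submodule.span R {m : M | t • m = 0} := by
  induction j generalizing u with
  | zero =>
    rw [pow_zero, one_smul] at hu
    rw [hu]
    exact zero_mem _
  | succ n ih =>
    rcases eq_or_ne n 0 with rfl | hn
    · exact Submodule.subset_span (by simpa using hu)
    have hunit : IsUnit (n : R) := by
      simpa using ((Nat.cast_ne_zero.mpr hn : (n : ℚ) ≠ 0).isUnit.map (algebraMap ℚ R))
    exact (Submodule.smul_mem_iff_of_isUnit _ hunit).mp
      (natCast_smul_mem_span_ker_of_pow_succ_smul_eq_zero h ih hu)

/-- Let `R` be an associative unital `ℚ`-algebra with elements `t, ∂` satisfying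
`∂·t − t·∂ = 1`, and let `M` be a left `R`-module. If `u ∈ M` is killed by `tʲ` for some
`j ≥ 1`, then `u` lies in the `R`-submodule generated by `M₀ = {m ∈ M : t·m = 0}`. -/
theorem mem_span_ker_of_pow_smul_eq_zero
    (R : Type*) [Ring R] [Algebra ℚ R] (t d : R) (h : d * t - t * d = 1)
    (M : Type*) [AddCommGroup M] [Module R M]
    (u : M) (j : ℕ) (hj : 1 ≤ j) (hu : t ^ j • u = 0) :
    u ∈ Submodule.span R {m : M | t • m = 0} :=
  mem_span_ker_of_pow_smul_eq_zero_general R t d h M u j hu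
end
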